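/- Under the Setup with the dual-side data and a complement Ỹ of Y' in Y, define for x̃ ∈ X̃ the conjugate character ^{x̃}λ̃ : ZỸ → ℂˣ by (^{x̃}λ̃)(u) := λ̃(x̃⁻¹·u·x̃) (well-defined since x̃⁻¹·u·x̃ ∈ ZỸ for u ∈ ZỸ). Then the map x̃ ↦ ^{x̃}λ̃ is injective on X̃, and the set of all group homomorphisms μ : ZỸ → ℂˣ whose restriction to Z equals λ is exactly {^{x̃}λ̃ : x̃ ∈ X̃}. -/

import Mathlib

/-!
Since `Z` is central and all commutators `[ỹ, v]` lie in `Z`, the map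
`v ↦ (ỹ ↦ λ([ỹ, v]))` is a homomorphism `Φ` from `V` to the character group of the abelian
group `Ỹ`; because `Y = Y'·Ỹ` and `Y'` pairs trivially with `X`, its kernel is `H'`.
Conjugating by `v` fixes `Z` and sends `ỹ` to `[ỹ, v]·ỹ`, so `^{v}λ̃` agrees with `λ` on `Z`
and with `Φ v` on `Ỹ`; an extension of `λ` to `ZỸ` is therefore `^{v}λ̃` exactly when its
restriction to `Ỹ` is `Φ v`. As `Y' ∩ Ỹ = 1`, the characters `Φ v` separate the points of `Ỹ`,
so `Φ` is onto by duality of finite abelian groups. Hence the extensions of `λ` are the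
`^{x̃}λ̃`, and they are distinct because `X̃` meets each coset of `H' = ker Φ` once.

Commutators are written out as `y⁻¹ * v⁻¹ * y * v`, the paper's `[y, v]`; Mathlib's `⁅y, v⁆`
is `y * v * y⁻¹ * v⁻¹`.
-/

open scoped Pointwise

open Subgroup

theorem CommGroup.eq_top_of_forall_apply_eq_one {G M : Type*} [CommGroup G] [Finite G]
    [CommMonoid M] [HasEnoughRootsOfUnity M (Monoid.exponent G)] {S : Subgroup (G →* Mˣ)}
    (hS : ∀ g : G, (∀ φ ∈ S, φ g = 1) → g = 1) : S = ⊤ := by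
  have h : (subgroupOrderIsoSubgroupMonoidHom G M).symm (OrderDual.toDual S) = ⊥ :=
    eq_bot_iff.mpr fun g hg ↦ hS g ((mem_subgroupOrderIsoSubgroupMonoidHom_symm_iff M S g).mp hg)
  rw [OrderIso.symm_apply_eq, OrderIso.map_bot] at h
  exact h

namespace Subgroup

variable {V : Type*} [Group V]

theorem IsComplement.eq_of_mul_inv_mem {K : Subgroup V} {T : Set V}
    (hKT : IsComplement (K : Set V) T) {a b : V} (ha : a ∈ T) (hb : b ∈ T)
    (hab : b * a⁻¹ ∈ K) : a = b :=
  congrArg Subtype.val <| (isComplement_iff_existsUnique_mul_inv_mem.mp hKT b).unique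
    (y₁ := ⟨a, ha⟩) (y₂ := ⟨b, hb⟩) hab (by simp)

variable {W A B : Subgroup V}

theorem left_le_of_coe_eq_mul (hW : (W : Set V) = A * B) : A ≤ W := by
  rw [← SetLike.coe_subset_coe, hW]
  exact Set.subset_mul_left _ B.one_mem

theorem right_le_of_coe_eq_mul (hW : (W : Set V) = A * B) : B ≤ W := by
  rw [← SetLike.coe_subset_coe, hW]
  exact Set.subset_mul_right _ A.one_mem

theorem monoidHom_ext_of_coe_eq_mul {M : Type*} [Monoid M] (hW : (W : Set V) = A * B)
    {μ ν : W →* M} (hA : ∀ a ∈ A, ∀ ha : a ∈ W, μ ⟨a, ha⟩ = ν ⟨a, ha⟩)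
    (hB : ∀ b ∈ B, ∀ hb : b ∈ W, μ ⟨b, hb⟩ = ν ⟨b, hb⟩) : μ = ν := by
  ext ⟨u, hu⟩
  obtain ⟨a, ha, b, hb, rfl⟩ : u ∈ (A : Set V) * B := hW ▸ hu
  have haW := left_le_of_coe_eq_mul hW ha
  have hbW := right_le_of_coe_eq_mul hW hb
  change μ (⟨a, haW⟩ * ⟨b, hbW⟩) = ν (⟨a, haW⟩ * ⟨b, hbW⟩)
  rw [map_mul, map_mul, hA a ha haW, hB b hb hbW]

end Subgroup

section Commutator

variable {V : Type*} [Group V]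

theorem commutator_mul_left_of_mem_center {a b v : V} (h : a⁻¹ * v⁻¹ * a * v ∈ center V) :
    (a * b)⁻¹ * v⁻¹ * (a * b) * v = (a⁻¹ * v⁻¹ * a * v) * (b⁻¹ * v⁻¹ * b * v) := by
  calc (a * b)⁻¹ * v⁻¹ * (a * b) * v = b⁻¹ * (a⁻¹ * v⁻¹ * a * v) * (v⁻¹ * b * v) := by group
    _ = (a⁻¹ * v⁻¹ * a * v) * b⁻¹ * (v⁻¹ * b * v) := by rw [mem_center_iff.mp h]
    _ = (a⁻¹ * v⁻¹ * a * v) * (b⁻¹ * v⁻¹ * b * v) := by group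

theorem commutator_mul_right_of_mem_center {y v w : V} (h : y⁻¹ * v⁻¹ * y * v ∈ center V) :
    y⁻¹ * (v * w)⁻¹ * y * (v * w) = (y⁻¹ * w⁻¹ * y * w) * (y⁻¹ * v⁻¹ * y * v) := by
  calc y⁻¹ * (v * w)⁻¹ * y * (v * w) = y⁻¹ * w⁻¹ * y * ((y⁻¹ * v⁻¹ * y * v) * w) := by group
    _ = y⁻¹ * w⁻¹ * y * (w * (y⁻¹ * v⁻¹ * y * v)) := by rw [mem_center_iff.mp h]
    _ = (y⁻¹ * w⁻¹ * y * w) * (y⁻¹ * v⁻¹ * y * v) := by group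

theorem commutator_mul_right_of_commute {y h x : V} (hyh : y * h = h * y) :
    y⁻¹ * (h * x)⁻¹ * y * (h * x) = y⁻¹ * x⁻¹ * y * x := by
  calc y⁻¹ * (h * x)⁻¹ * y * (h * x) = y⁻¹ * x⁻¹ * (h⁻¹ * (y * h)) * x := by group
    _ = y⁻¹ * x⁻¹ * y * x := by rw [hyh]; group

theorem inv_mul_mul_eq_commutator_mul {y v : V} (h : y⁻¹ * v⁻¹ * y * v ∈ center V) :
    v⁻¹ * y * v = (y⁻¹ * v⁻¹ * y * v) * y := by
  rw [← mem_center_iff.mp h y]; group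

theorem commutator_mem_of_transversal {H Z : Subgroup V} {X : Set V}
    (hX : ∀ v : V, ∃ h ∈ H, ∃ x ∈ X, h * x = v) {y : V} (hyH : ∀ h ∈ H, y * h = h * y)
    (hyX : ∀ x ∈ X, x⁻¹ * y⁻¹ * x * y ∈ Z) (v : V) : y⁻¹ * v⁻¹ * y * v ∈ Z := by
  obtain ⟨h, hh, x, hx, rfl⟩ := hX v
  rw [commutator_mul_right_of_commute (hyH h hh),
    show y⁻¹ * x⁻¹ * y * x = (x⁻¹ * y⁻¹ * x * y)⁻¹ by group]
  exact Z.inv_mem (hyX x hx)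

end Commutator

section CommPairing

variable {V M : Type*} [Group V] [CommGroup M] {Z Y : Subgroup V} (hZ : Z ≤ center V)
  (hY : ∀ y ∈ Y, ∀ v : V, y⁻¹ * v⁻¹ * y * v ∈ Z) (lam : Z →* M)

def commPairing : V →* (Y →* M) where
  toFun v :=
    { toFun y := lam ⟨_, hY y y.2 v⟩
      map_one' := by simp; exact map_one lam
      map_mul' y₁ y₂ := by
        rw [← map_mul]
        exact congrArg lam (Subtype.ext (commutator_mul_left_of_mem_center (hZ (hY _ y₁.2 v)))) }
  map_one' := by ext; simp; exact map_one lam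
  map_mul' v w := by
    ext y
    simp only [MonoidHom.mul_apply, MonoidHom.coe_mk, OneHom.coe_mk]
    rw [mul_comm, ← map_mul]
    exact congrArg lam (Subtype.ext (commutator_mul_right_of_mem_center (hZ (hY _ y.2 v))))

theorem commPairing_apply (v : V) (y : Y) : commPairing hZ hY lam v y = lam ⟨_, hY y y.2 v⟩ :=
  rfl

theorem commPairing_apply_eq_inv {x : V} {y : Y} (hc : x⁻¹ * (y : V)⁻¹ * x * y ∈ Z) :
    commPairing hZ hY lam x y = (lam ⟨_, hc⟩)⁻¹ := by
  rw [commPairing_apply, ← map_inv]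
  exact congrArg lam (Subtype.ext (by
    change (y : V)⁻¹ * x⁻¹ * y * x = (x⁻¹ * (y : V)⁻¹ * x * y)⁻¹
    group))

theorem commPairing_mul_apply_of_commute {h x : V} {y : Y} (hyh : (y : V) * h = h * y) :
    commPairing hZ hY lam (h * x) y = commPairing hZ hY lam x y :=
  congrArg lam (Subtype.ext (commutator_mul_right_of_commute hyh))

end CommPairing

theorem range_commPairing_eq_top {V : Type*} [Group V] {Z Y : Subgroup V} [Finite Y]
    (hZ : Z ≤ center V) (hY : ∀ y ∈ Y, ∀ v : V, y⁻¹ * v⁻¹ * y * v ∈ Z) (lam : Z →* ℂˣ)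
    (hcomm : ∀ a ∈ Y, ∀ b ∈ Y, a * b = b * a)
    (hsep : ∀ y : Y, (∀ v : V, commPairing hZ hY lam v y = 1) → y = 1) :
    (commPairing hZ hY lam).range = ⊤ := by
  let _ : CommGroup Y := { mul_comm a b := Subtype.ext (hcomm a a.2 b b.2) }
  have : NeZero (Monoid.exponent Y : ℂ) :=
    ⟨Nat.cast_ne_zero.mpr Monoid.exponent_ne_zero_of_finite⟩
  exact CommGroup.eq_top_of_forall_apply_eq_one fun y hy ↦
    hsep y fun v ↦ hy _ (MonoidHom.mem_range.mpr ⟨v, rfl⟩)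

theorem ker_commPairing_eq {V M : Type*} [Group V] [CommGroup M] {H Y Z Yt H' : Subgroup V}
    {X : Set V} (hZ : Z ≤ center V) (lam : Z →* M)
    (hX : ∀ v : V, ∃ h ∈ H, ∃ x ∈ X, h * x = v)
    (hYcent : ∀ y ∈ Y, ∀ h ∈ H, y * h = h * y)
    (hXYZ : ∀ x ∈ X, ∀ y ∈ Y, x⁻¹ * y⁻¹ * x * y ∈ Z)
    (hH' : (H' : Set V) = {v : V | ∃ h ∈ H, ∃ x ∈ X,
      (∀ y : V, y ∈ Y → ∀ (hc : x⁻¹ * y⁻¹ * x * y ∈ Z),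
        lam ⟨x⁻¹ * y⁻¹ * x * y, hc⟩ = 1) ∧ v = h * x})
    (hYtY : Yt ≤ Y)
    (hcompl₂ : ∀ y ∈ Y, ∃ y' : V,
      (y' ∈ Y ∧ ∀ x ∈ X, ∀ (hc : x⁻¹ * y'⁻¹ * x * y' ∈ Z),
        lam ⟨x⁻¹ * y'⁻¹ * x * y', hc⟩ = 1) ∧ ∃ yt ∈ Yt, y = y' * yt)
    (hYt : ∀ y ∈ Yt, ∀ v : V, y⁻¹ * v⁻¹ * y * v ∈ Z) :
    (commPairing hZ hYt lam).ker = H' := by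
  have hY (y) (hy : y ∈ Y) := commutator_mem_of_transversal hX (hYcent y hy) (hXYZ · · y hy)
  ext v
  rw [MonoidHom.mem_ker, ← SetLike.mem_coe, hH']
  constructor
  · intro hv
    obtain ⟨h, hh, x, hx, rfl⟩ := hX v
    refine ⟨h, hh, x, hx, fun y hy hc ↦ ?_, rfl⟩
    obtain ⟨y', ⟨hy', hy'X⟩, yt, hyt, rfl⟩ := hcompl₂ y hy
    -- the pairing with `h * x` is trivial on `y'` (it lies in `Y'`) and on `yt` (by `hv`)
    have hyt' : commPairing hZ hY lam (h * x) ⟨yt, hYtY hyt⟩ = 1 :=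
      DFunLike.congr_fun hv ⟨yt, hyt⟩
    have hsplit : (⟨y' * yt, hy⟩ : Y) = ⟨y', hy'⟩ * ⟨yt, hYtY hyt⟩ := rfl
    rw [← inv_inv (lam _), ← commPairing_apply_eq_inv hZ hY lam (y := ⟨y' * yt, hy⟩),
      ← commPairing_mul_apply_of_commute hZ hY lam (hYcent _ hy h hh), hsplit, map_mul, hyt',
      commPairing_mul_apply_of_commute hZ hY lam (hYcent _ hy' h hh),
      commPairing_apply_eq_inv hZ hY lam (hXYZ x hx y' hy'), hy'X x hx, inv_one, one_mul, inv_one]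
  · rintro ⟨h, hh, x, hx, hx', rfl⟩
    ext yt
    rw [commPairing_mul_apply_of_commute hZ hYt lam (hYcent _ (hYtY yt.2) h hh),
      commPairing_apply_eq_inv hZ hYt lam (hXYZ x hx yt (hYtY yt.2)),
      hx' yt (hYtY yt.2), inv_one, MonoidHom.one_apply]

section ConjChar

variable {V M : Type*} [Group V] [CommGroup M] {W Z Yt : Subgroup V} [W.Normal]

def conjChar (μ : W →* M) (g : V) : W →* M :=
  μ.comp (MulAut.conjNormal g⁻¹).toMonoidHom

theorem conjChar_apply (μ : W →* M) (g : V) (u : W) :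
    conjChar μ g u = μ ⟨g⁻¹ * u * g, by simpa using ‹W.Normal›.conj_mem u u.2 g⁻¹⟩ :=
  congrArg μ (Subtype.ext (by simp))

variable {lam : Z →* M} {lamt : W →* M}

theorem conjChar_apply_of_mem_center
    (hlamt : ∀ (z yt : V) (hz : z ∈ Z) (_ : yt ∈ Yt) (hm : z * yt ∈ W),
      lamt ⟨z * yt, hm⟩ = lam ⟨z, hz⟩) (hZ : Z ≤ center V) (g z : V)
    (hz : z ∈ Z) (hm : z ∈ W) : conjChar lamt g ⟨z, hm⟩ = lam ⟨z, hz⟩ := by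
  have hconj : g⁻¹ * z * g = z * 1 := by
    rw [mem_center_iff.mp (hZ hz) g⁻¹]; group
  rw [conjChar_apply, ← hlamt z 1 hz Yt.one_mem (by rwa [mul_one])]
  exact congrArg lamt (Subtype.ext hconj)

theorem conjChar_apply_eq_commPairing
    (hlamt : ∀ (z yt : V) (hz : z ∈ Z) (_ : yt ∈ Yt) (hm : z * yt ∈ W),
      lamt ⟨z * yt, hm⟩ = lam ⟨z, hz⟩) (hZ : Z ≤ center V)
    (hY : ∀ y ∈ Yt, ∀ v : V, y⁻¹ * v⁻¹ * y * v ∈ Z) (g : V) (y : Yt) (hm : (y : V) ∈ W) :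
    conjChar lamt g ⟨y, hm⟩ = commPairing hZ hY lam g y := by
  have hconj := inv_mul_mul_eq_commutator_mul (hZ (hY y y.2 g))
  have hmem : g⁻¹ * y * g ∈ W := by simpa using ‹W.Normal›.conj_mem _ hm g⁻¹
  rw [conjChar_apply, commPairing_apply, ← hlamt _ y _ y.2 (hconj ▸ hmem)]
  exact congrArg lamt (Subtype.ext hconj)

theorem eq_conjChar_iff
    (hlamt : ∀ (z yt : V) (hz : z ∈ Z) (_ : yt ∈ Yt) (hm : z * yt ∈ W),
      lamt ⟨z * yt, hm⟩ = lam ⟨z, hz⟩) (hW : (W : Set V) = Z * Yt) (hZ : Z ≤ center V)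
    (hY : ∀ y ∈ Yt, ∀ v : V, y⁻¹ * v⁻¹ * y * v ∈ Z) {μ : W →* M}
    (hμ : ∀ (z : V) (hz : z ∈ Z) (hm : z ∈ W), μ ⟨z, hm⟩ = lam ⟨z, hz⟩) (g : V) :
    μ = conjChar lamt g ↔
      μ.comp (inclusion (right_le_of_coe_eq_mul hW)) = commPairing hZ hY lam g := by
  constructor
  · rintro rfl
    ext y
    exact conjChar_apply_eq_commPairing hlamt hZ hY g y _
  · intro hμY
    refine monoidHom_ext_of_coe_eq_mul hW (fun z hz hm ↦ ?_) (fun y hy hm ↦ ?_)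
    · rw [hμ z hz hm, conjChar_apply_of_mem_center hlamt hZ g z hz hm]
    · rw [conjChar_apply_eq_commPairing hlamt hZ hY g ⟨y, hy⟩ hm, ← hμY]
      rfl

theorem conjChar_eq_conjChar_iff
    (hlamt : ∀ (z yt : V) (hz : z ∈ Z) (_ : yt ∈ Yt) (hm : z * yt ∈ W),
      lamt ⟨z * yt, hm⟩ = lam ⟨z, hz⟩) (hW : (W : Set V) = Z * Yt) (hZ : Z ≤ center V)
    (hY : ∀ y ∈ Yt, ∀ v : V, y⁻¹ * v⁻¹ * y * v ∈ Z) (g g' : V) :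
    conjChar lamt g = conjChar lamt g' ↔ commPairing hZ hY lam g = commPairing hZ hY lam g' := by
  rw [eq_conjChar_iff hlamt hW hZ hY (conjChar_apply_of_mem_center hlamt hZ g),
    (eq_conjChar_iff hlamt hW hZ hY (conjChar_apply_of_mem_center hlamt hZ g) g).mp rfl]

theorem exists_eq_conjChar
    (hlamt : ∀ (z yt : V) (hz : z ∈ Z) (_ : yt ∈ Yt) (hm : z * yt ∈ W),
      lamt ⟨z * yt, hm⟩ = lam ⟨z, hz⟩) (hW : (W : Set V) = Z * Yt) (hZ : Z ≤ center V)
    (hY : ∀ y ∈ Yt, ∀ v : V, y⁻¹ * v⁻¹ * y * v ∈ Z) (hrange : (commPairing hZ hY lam).range = ⊤)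
    {μ : W →* M} (hμ : ∀ (z : V) (hz : z ∈ Z) (hm : z ∈ W), μ ⟨z, hm⟩ = lam ⟨z, hz⟩) :
    ∃ g, μ = conjChar lamt g := by
  obtain ⟨g, hg⟩ := MonoidHom.mem_range.mp (hrange ▸ mem_top (μ.comp (inclusion _)))
  exact ⟨g, (eq_conjChar_iff hlamt hW hZ hY hμ g).mpr hg.symm⟩

end ConjChar

theorem conjugates_of_lamtilde_general
    {V : Type*} [Group V] [Fintype V]
    (H Y Z : Subgroup V) (X : Set V)
    (hXrep : ∀ v : V, ∃! p : ↥H × ↥X, (p.1 : V) * (p.2 : V) = v)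
    (hZcent : Z ≤ Subgroup.center V)
    (hYH : Y ≤ H)
    (hYcent : ∀ y ∈ Y, ∀ h ∈ H, y * h = h * y)
    (lam : Z →* ℂˣ)
    (hXYZ : ∀ x ∈ X, ∀ y ∈ Y, x⁻¹ * y⁻¹ * x * y ∈ Z)
    -- `H'` is the subgroup `H·X'` of `V` (the inertia group of `λ̂`)
    (H' : Subgroup V)
    (hH' : (H' : Set V) = {v : V | ∃ h ∈ H, ∃ x ∈ X,
      (∀ (y : V) (hy : y ∈ Y) (hc : x⁻¹ * y⁻¹ * x * y ∈ Z),
        lam ⟨x⁻¹ * y⁻¹ * x * y, hc⟩ = 1) ∧ v = h * x})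
    -- `X̃` is a transversal of the right cosets of `H'` in `V`
    (Xt : Set V)
    (hXtrep : ∀ v : V, ∃! p : ↥H' × ↥Xt, (p.1 : V) * (p.2 : V) = v)
    -- `Ỹ` is a complement of `Y' = {y ∈ Y : λ([x,y]) = 1 ∀ x ∈ X}` in `Y`
    (Yt : Subgroup V) (hYtY : Yt ≤ Y)
    (hcompl₁ : ∀ y : V, y ∈ Yt →
      (y ∈ Y ∧ ∀ x ∈ X, ∀ (hc : x⁻¹ * y⁻¹ * x * y ∈ Z),
        lam ⟨x⁻¹ * y⁻¹ * x * y, hc⟩ = 1) → y = 1)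
    (hcompl₂ : ∀ y ∈ Y, ∃ y' : V,
      (y' ∈ Y ∧ ∀ x ∈ X, ∀ (hc : x⁻¹ * y'⁻¹ * x * y' ∈ Z),
        lam ⟨x⁻¹ * y'⁻¹ * x * y', hc⟩ = 1) ∧ ∃ yt ∈ Yt, y = y' * yt)
    -- `W₂` is the subgroup `ZỸ` of `V`, and `λ̃ : ZỸ → ℂˣ` satisfies `λ̃(z·ỹ) = λ(z)`
    (W₂ : Subgroup V)
    (hW₂ : (W₂ : Set V) = (Z : Set V) * (Yt : Set V))
    (lamt : W₂ →* ℂˣ)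
    (hlamt : ∀ (z yt : V) (hz : z ∈ Z) (hyt : yt ∈ Yt) (hm : z * yt ∈ W₂),
      lamt ⟨z * yt, hm⟩ = lam ⟨z, hz⟩)
    -- `ZỸ` is normal in `V`, so the conjugate characters are well defined
    (hconjmem : ∀ (g : V), ∀ u ∈ W₂, g⁻¹ * u * g ∈ W₂)
    -- `conjlam x̃ : ZỸ → ℂˣ` is the conjugate character `u ↦ λ̃(x̃⁻¹·u·x̃)`
    (conjlam : V → (↥W₂ → ℂˣ))
    (hconjlam : ∀ (xt : V) (u : ↥W₂),
      conjlam xt u = lamt ⟨xt⁻¹ * (u : V) * xt, hconjmem xt (u : V) u.2⟩) :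
    Set.InjOn conjlam Xt ∧
    {f : ↥W₂ → ℂˣ | ∃ μ : ↥W₂ →* ℂˣ, ⇑μ = f ∧
        ∀ (z : V) (hz : z ∈ Z) (hm : z ∈ W₂), μ ⟨z, hm⟩ = lam ⟨z, hz⟩} =
      {f : ↥W₂ → ℂˣ | ∃ xt ∈ Xt, f = conjlam xt} := by
  have hX (v : V) : ∃ h ∈ H, ∃ x ∈ X, h * x = v :=
    let ⟨⟨h, x⟩, hv, _⟩ := hXrep v
    ⟨h, h.2, x, x.2, hv⟩
  have hYt (y) (hy : y ∈ Yt) : ∀ v : V, y⁻¹ * v⁻¹ * y * v ∈ Z :=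
    commutator_mem_of_transversal hX (hYcent y (hYtY hy)) (hXYZ · · y (hYtY hy))
  set Φ := commPairing hZcent hYt lam
  have hker : Φ.ker = H' := ker_commPairing_eq hZcent lam hX hYcent hXYZ hH' hYtY hcompl₂ hYt
  have hrange : Φ.range = ⊤ :=
    range_commPairing_eq_top hZcent hYt lam (fun a ha b hb ↦ hYcent a (hYtY ha) b (hYH (hYtY hb)))
      fun y hy ↦ Subtype.ext <| hcompl₁ y y.2 ⟨hYtY y.2, fun x _ hc ↦ by
        rw [← inv_inv (lam _), ← commPairing_apply_eq_inv hZcent hYt lam hc, hy x, inv_one]⟩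
  have : W₂.Normal := ⟨fun n hn g ↦ by simpa using hconjmem g⁻¹ n hn⟩
  have hconj (g : V) : conjlam g = conjChar lamt g :=
    funext fun u ↦ (hconjlam g u).trans (conjChar_apply lamt g u).symm
  have hXt := isComplement_iff_existsUnique.mpr hXtrep
  refine ⟨fun a ha b hb hab ↦ hXt.eq_of_mul_inv_mem ha hb ?_, Set.ext fun f ↦ ⟨?_, ?_⟩⟩
  · rw [← hker, MonoidHom.mem_ker, map_mul, map_inv, mul_inv_eq_one,
      ← conjChar_eq_conjChar_iff hlamt hW₂ hZcent hYt]
    exact DFunLike.coe_injective (by rw [← hconj, ← hconj, hab])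
  · rintro ⟨μ, rfl, hμ⟩
    obtain ⟨v, rfl⟩ := exists_eq_conjChar hlamt hW₂ hZcent hYt hrange hμ
    obtain ⟨⟨h', xt⟩, rfl, -⟩ := hXtrep v
    refine ⟨xt, xt.2, ?_⟩
    rw [hconj, DFunLike.coe_fn_eq, conjChar_eq_conjChar_iff hlamt hW₂ hZcent hYt, map_mul,
      MonoidHom.mem_ker.mp (hker ▸ h'.2), one_mul]
  · rintro ⟨xt, -, rfl⟩
    exact ⟨conjChar lamt xt, (hconj xt).symm, conjChar_apply_of_mem_center hlamt hZcent xt⟩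

/-- Under the Setup with the dual-side data and a complement `Ỹ` of `Y'`
in `Y`, define for `x̃ ∈ X̃` the conjugate character `^{x̃}λ̃ : ZỸ → ℂˣ`,
`u ↦ λ̃(x̃⁻¹·u·x̃)` (well defined since `ZỸ ⊴ V`).  Then the map `x̃ ↦ ^{x̃}λ̃` is
injective on `X̃`, and the set of all group homomorphisms `μ : ZỸ → ℂˣ` restricting to
`λ` on `Z` is exactly `{^{x̃}λ̃ : x̃ ∈ X̃}`. -/
theorem conjugates_of_lamtilde
    {V : Type*} [Group V] [Fintype V]
    (H Y Z : Subgroup V) (X : Set V)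
    (hXrep : ∀ v : V, ∃! p : ↥H × ↥X, (p.1 : V) * (p.2 : V) = v)
    (hZcent : Z ≤ Subgroup.center V)
    (hYH : Y ≤ H)
    (hYcent : ∀ y ∈ Y, ∀ h ∈ H, y * h = h * y)
    (hZY : Z ⊓ Y = ⊥)
    (lam : Z →* ℂˣ)
    (hXYZ : ∀ x ∈ X, ∀ y ∈ Y, x⁻¹ * y⁻¹ * x * y ∈ Z)
    -- `H'` is the subgroup `H·X'` of `V` (the inertia group of `λ̂`)
    (H' : Subgroup V)
    (hH' : (H' : Set V) = {v : V | ∃ h ∈ H, ∃ x ∈ X,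
      (∀ (y : V) (hy : y ∈ Y) (hc : x⁻¹ * y⁻¹ * x * y ∈ Z),
        lam ⟨x⁻¹ * y⁻¹ * x * y, hc⟩ = 1) ∧ v = h * x})
    -- `X̃` is a transversal of the right cosets of `H'` in `V`
    (Xt : Set V)
    (hXtrep : ∀ v : V, ∃! p : ↥H' × ↥Xt, (p.1 : V) * (p.2 : V) = v)
    -- `Ỹ` is a complement of `Y' = {y ∈ Y : λ([x,y]) = 1 ∀ x ∈ X}` in `Y`
    (Yt : Subgroup V) (hYtY : Yt ≤ Y)
    (hcompl₁ : ∀ y : V, y ∈ Yt →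
      (y ∈ Y ∧ ∀ x ∈ X, ∀ (hc : x⁻¹ * y⁻¹ * x * y ∈ Z),
        lam ⟨x⁻¹ * y⁻¹ * x * y, hc⟩ = 1) → y = 1)
    (hcompl₂ : ∀ y ∈ Y, ∃ y' : V,
      (y' ∈ Y ∧ ∀ x ∈ X, ∀ (hc : x⁻¹ * y'⁻¹ * x * y' ∈ Z),
        lam ⟨x⁻¹ * y'⁻¹ * x * y', hc⟩ = 1) ∧ ∃ yt ∈ Yt, y = y' * yt)
    -- `W₂` is the subgroup `ZỸ` of `V`, and `λ̃ : ZỸ → ℂˣ` satisfies `λ̃(z·ỹ) = λ(z)`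
    (W₂ : Subgroup V)
    (hW₂ : (W₂ : Set V) = (Z : Set V) * (Yt : Set V))
    (lamt : W₂ →* ℂˣ)
    (hlamt : ∀ (z yt : V) (hz : z ∈ Z) (hyt : yt ∈ Yt) (hm : z * yt ∈ W₂),
      lamt ⟨z * yt, hm⟩ = lam ⟨z, hz⟩)
    -- `ZỸ` is normal in `V`, so the conjugate characters are well defined
    (hconjmem : ∀ (g : V), ∀ u ∈ W₂, g⁻¹ * u * g ∈ W₂)
    -- `conjlam x̃ : ZỸ → ℂˣ` is the conjugate character `u ↦ λ̃(x̃⁻¹·u·x̃)`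
    (conjlam : V → (↥W₂ → ℂˣ))
    (hconjlam : ∀ (xt : V) (u : ↥W₂),
      conjlam xt u = lamt ⟨xt⁻¹ * (u : V) * xt, hconjmem xt (u : V) u.2⟩) :
    Set.InjOn conjlam Xt ∧
    {f : ↥W₂ → ℂˣ | ∃ μ : ↥W₂ →* ℂˣ, ⇑μ = f ∧
        ∀ (z : V) (hz : z ∈ Z) (hm : z ∈ W₂), μ ⟨z, hm⟩ = lam ⟨z, hz⟩} =
      {f : ↥W₂ → ℂˣ | ∃ xt ∈ Xt, f = conjlam xt} :=
  conjugates_of_lamtilde_general H Y Z X hXrep hZcent hYH hYcent lam hXYZ H' hH' Xt hXtrep Yt hYtY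
    hcompl₁ hcompl₂ W₂ hW₂ lamt hlamt hconjmem conjlam hconjlam
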